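/- arXiv:1010.4990 — 2 statements merged into one kernel-verified Lean document; each statement's English description precedes it below -/
import Mathlib

section
/- For q ∈ {1, 2} and any w > 0 there is a constant K (depending on q and w) such that for all real x, y, z and all u > 0: | |x+y+z|²·1_{|x+y+z| ≤ u} − x² |^q ≤ K·( (|y| ∧ u)^{2q} + |z|^{2q} + |x|^q·(|y| ∧ u)^q + |x|^q·|z|^q + |x|^{(2+w)q}/u^{wq} ). -/
lemma aux1 (q : ℕ) (w u x : ℝ) (hw : 0 < w) (hu : 0 < u) (hx : u/2 ≤ |x|) :
    x ^ (2*q) ≤ (2:ℝ) ^ (w*(q:ℝ)) * (|x| ^ ((2 + w) * (q : ℝ)) / u ^ (w * (q : ℝ))) := by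
  have hx0 : 0 < |x| := lt_of_lt_of_le (by linarith) hx
  have hwq : (0:ℝ) ≤ w * q := by positivity
  have hq1 : |x| ^ ((2 + w) * (q:ℝ)) = |x| ^ (2*q) * |x| ^ (w*(q:ℝ)) := by
    rw [show (2 + w) * (q:ℝ) = ((2*q : ℕ):ℝ) + w*(q:ℝ) by push_cast; ring,
      Real.rpow_add hx0, Real.rpow_natCast]
  have hdiv : |x| ^ (w*(q:ℝ)) / u ^ (w*(q:ℝ)) = (|x|/u) ^ (w*(q:ℝ)) :=
    (Real.div_rpow hx0.le hu.le _).symm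
  have h12 : ((1:ℝ)/2) ^ (w*(q:ℝ)) ≤ (|x|/u) ^ (w*(q:ℝ)) := by
    apply Real.rpow_le_rpow (by norm_num) _ hwq
    rw [le_div_iff₀ hu]; linarith
  have hone : (2:ℝ) ^ (w*(q:ℝ)) * ((1:ℝ)/2) ^ (w*(q:ℝ)) = 1 := by
    rw [← Real.mul_rpow (by norm_num) (by norm_num)]; norm_num
  have hxe : x ^ (2*q) = |x| ^ (2*q) := by rw [pow_mul, pow_mul, sq_abs]
  have hX : (0:ℝ) ≤ |x| ^ (2*q) := by positivity
  have hc : (0:ℝ) < (2:ℝ) ^ (w*(q:ℝ)) := Real.rpow_pos_of_pos two_pos _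
  rw [hxe, hq1, mul_div_assoc, hdiv]
  nlinarith [mul_le_mul_of_nonneg_left h12 hc.le, mul_le_mul_of_nonneg_left
    (mul_le_mul_of_nonneg_left h12 hc.le) hX]

lemma final (c A t1 t2 t3 t4 L : ℝ) (hc : 0 < c) (h1 : 0 ≤ t1) (h2 : 0 ≤ t2)
    (h3 : 0 ≤ t3) (h4 : 0 ≤ t4) (hA : 0 ≤ A)
    (h : L ≤ 200*(t1+t2+t3+t4) + 2*c*(t1+A)) :
    L ≤ 200 * (c + 1) * (t1 + t2 + t3 + t4 + A) := by
  nlinarith [mul_nonneg hc.le h1, mul_nonneg hc.le h2, mul_nonneg hc.le h3,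
    mul_nonneg hc.le h4, mul_nonneg hc.le hA]

set_option maxHeartbeats 1000000 in
theorem stmt_8 (q : ℕ) (hq : q = 1 ∨ q = 2) (w : ℝ) (hw : 0 < w) :
    ∃ K : ℝ, 0 < K ∧ ∀ x y z u : ℝ, 0 < u →
      |(if |x + y + z| ≤ u then |x + y + z| ^ 2 else 0) - x ^ 2| ^ q ≤
        K * ((min |y| u) ^ (2 * q) + |z| ^ (2 * q) + |x| ^ q * (min |y| u) ^ q
          + |x| ^ q * |z| ^ q + |x| ^ ((2 + w) * (q : ℝ)) / u ^ (w * (q : ℝ))) := by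
  refine ⟨200 * ((2:ℝ) ^ (w*(q:ℝ)) + 1), by positivity, ?_⟩
  intro x y z u hu
  set c := (2:ℝ) ^ (w*(q:ℝ)) with hc_def
  have hc : 0 < c := Real.rpow_pos_of_pos two_pos _
  set A := |x| ^ ((2 + w) * (q : ℝ)) / u ^ (w * (q : ℝ)) with hA_def
  have hA : 0 ≤ A := by rw [hA_def]; positivity
  set m := min |y| u with hm_def
  have hm0 : 0 ≤ m := le_min (abs_nonneg y) hu.le
  have ha : 0 ≤ |x| := abs_nonneg x
  have hb : 0 ≤ |y| := abs_nonneg y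
  have hz0 : 0 ≤ |z| := abs_nonneg z
  by_cases hSu : |x + y + z| ≤ u
  · rw [if_pos hSu, sq_abs]
    set E := |(x+y+z)^2 - x^2| with hE_def
    have hE0 : 0 ≤ E := abs_nonneg _
    by_cases hy : |y| ≤ u
    · have hmm : m = |y| := min_eq_left hy
      have hE : E ≤ (m + |z|) ^ 2 + 2 * |x| * (m + |z|) := by
        rw [hmm]
        have h1 : |y+z| ≤ |y| + |z| := abs_add_le _ _
        have h2 : (x+y+z)^2 - x^2 = (y+z)^2 + 2*(x*(y+z)) := by ring
        rw [hE_def, h2]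
        calc |(y+z)^2 + 2*(x*(y+z))| ≤ |(y+z)^2| + |2*(x*(y+z))| := abs_add_le _ _
          _ = |y + z| ^ 2 + 2 * (|x| * |y + z|) := by rw [abs_mul, abs_mul, abs_pow, abs_two]
          _ ≤ (|y| + |z|) ^ 2 + 2 * |x| * (|y| + |z|) := by nlinarith [abs_nonneg (y+z)]
      rcases hq with rfl | rfl
      · simp only [pow_one, Nat.reduceMul]
        refine final c A _ _ _ _ _ hc (pow_nonneg hm0 2) (pow_nonneg hz0 2)
          (mul_nonneg ha hm0) (mul_nonneg ha hz0) hA ?_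
        · nlinarith [hE, sq_nonneg (m - |z|), mul_nonneg hc.le hA,
            mul_nonneg hc.le (mul_nonneg hm0 hm0)]
      · simp only [Nat.reduceMul]
        refine final c A _ _ _ _ _ hc (pow_nonneg hm0 4) (pow_nonneg hz0 4)
          (mul_nonneg (pow_nonneg ha 2) (pow_nonneg hm0 2))
          (mul_nonneg (pow_nonneg ha 2) (pow_nonneg hz0 2)) hA ?_
        have h2 : E^2 ≤ ((m + |z|) ^ 2 + 2 * |x| * (m + |z|)) ^ 2 := by
          have := pow_le_pow_left₀ hE0 hE 2
          simpa using this
        have key : ((m + |z|) ^ 2 + 2 * |x| * (m + |z|)) ^ 2 ≤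
            200*(m^4+|z|^4+|x|^2*m^2+|x|^2* |z|^2) := by
          nlinarith [sq_nonneg (m - |z|), sq_nonneg (m + |z|), sq_nonneg (|x| *m - |x| * |z|),
            sq_nonneg (m^2 - |z|^2), sq_nonneg ((m+|z|)^2 - |x| *(m+|z|)),
            mul_nonneg ha hm0, mul_nonneg ha hz0,
            mul_nonneg (mul_nonneg ha ha) (mul_nonneg hm0 hz0),
            mul_nonneg (mul_nonneg hm0 hz0) (mul_nonneg hm0 hz0),
            mul_nonneg (mul_nonneg hm0 hm0) (mul_nonneg hm0 hz0),
            mul_nonneg (mul_nonneg hz0 hz0) (mul_nonneg hm0 hz0),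
            sq_nonneg (m^2 + |z|^2 - |x| *m - |x| * |z|)]
        nlinarith [h2, key, mul_nonneg hc.le hA,
          mul_nonneg hc.le (mul_nonneg (mul_nonneg hm0 hm0) (mul_nonneg hm0 hm0))]
    · have hmm : m = u := min_eq_right (le_of_not_ge hy)
      have hS2 : (x+y+z)^2 ≤ u^2 := by nlinarith [sq_abs (x+y+z), abs_nonneg (x+y+z)]
      have hE : E ≤ u^2 + x^2 := by
        rw [hE_def, abs_le]
        constructor <;> nlinarith [sq_nonneg (x+y+z), sq_nonneg x]
      rw [hmm]
      by_cases hxu : |x| ≤ u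
      · have hx2 : x^2 ≤ u^2 := by nlinarith [sq_abs x]
        rcases hq with rfl | rfl
        · simp only [pow_one, Nat.reduceMul]
          refine final c A _ _ _ _ _ hc (pow_nonneg hu.le 2) (pow_nonneg hz0 2)
            (mul_nonneg ha hu.le) (mul_nonneg ha hz0) hA ?_
          nlinarith [hE, hx2, mul_nonneg hc.le hA, mul_nonneg hc.le (mul_nonneg hu.le hu.le)]
        · simp only [Nat.reduceMul]
          refine final c A _ _ _ _ _ hc (pow_nonneg hu.le 4) (pow_nonneg hz0 4)
            (mul_nonneg (pow_nonneg ha 2) (pow_nonneg hu.le 2))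
            (mul_nonneg (pow_nonneg ha 2) (pow_nonneg hz0 2)) hA ?_
          have hE' : E ≤ 2*u^2 := by linarith
          have h2 : E^2 ≤ (2*u^2)^2 := by
            have := pow_le_pow_left₀ hE0 hE' 2
            simpa using this
          nlinarith [h2, mul_nonneg hc.le hA,
            mul_nonneg hc.le (mul_nonneg (mul_nonneg hu.le hu.le) (mul_nonneg hu.le hu.le))]
      · have hx2 : u/2 ≤ |x| := by linarith [le_of_not_ge hxu]
        have haux := aux1 q w u x hw hu hx2
        rw [← hc_def, ← hA_def] at haux
        rcases hq with rfl | rfl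
        · simp only [pow_one, Nat.reduceMul] at haux ⊢
          refine final c A _ _ _ _ _ hc (pow_nonneg hu.le 2) (pow_nonneg hz0 2)
            (mul_nonneg ha hu.le) (mul_nonneg ha hz0) hA ?_
          nlinarith [hE, haux, mul_nonneg hc.le hA, mul_nonneg hc.le (mul_nonneg hu.le hu.le)]
        · simp only [Nat.reduceMul] at haux ⊢
          refine final c A _ _ _ _ _ hc (pow_nonneg hu.le 4) (pow_nonneg hz0 4)
            (mul_nonneg (pow_nonneg ha 2) (pow_nonneg hu.le 2))
            (mul_nonneg (pow_nonneg ha 2) (pow_nonneg hz0 2)) hA ?_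
          have h2 : E^2 ≤ (u^2 + x^2)^2 := by
            have := pow_le_pow_left₀ hE0 hE 2
            simpa using this
          nlinarith [h2, haux, sq_nonneg (u^2 - x^2), mul_nonneg hc.le hA,
            mul_nonneg hc.le (mul_nonneg (mul_nonneg hu.le hu.le) (mul_nonneg hu.le hu.le))]
  · rw [if_neg hSu]
    have h0 : |0 - x^2| = x^2 := by
      rw [zero_sub, abs_neg, abs_of_nonneg (sq_nonneg x)]
    rw [h0, ← pow_mul]
    have hSu' : u < |x+y+z| := lt_of_not_ge hSu
    by_cases hx2 : u/2 ≤ |x|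
    · have haux := aux1 q w u x hw hu hx2
      rw [← hc_def, ← hA_def] at haux
      refine final c A _ _ _ _ _ hc (pow_nonneg hm0 _) (pow_nonneg hz0 _)
        (mul_nonneg (pow_nonneg ha _) (pow_nonneg hm0 _))
        (mul_nonneg (pow_nonneg ha _) (pow_nonneg hz0 _)) hA ?_
      nlinarith [haux, mul_nonneg hc.le hA, mul_nonneg hc.le (pow_nonneg hm0 (2*q)),
        pow_nonneg hm0 (2*q), pow_nonneg hz0 (2*q),
        mul_nonneg (pow_nonneg ha q) (pow_nonneg hm0 q),
        mul_nonneg (pow_nonneg ha q) (pow_nonneg hz0 q)]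
    · push_neg at hx2
      have hxx : x^2 ≤ u^2/4 := by nlinarith [sq_abs x, abs_nonneg x]
      have hyz : u/2 < |y + z| := by
        have h1 : |x + y + z| ≤ |x| + |y + z| := by
          have := abs_add_le x (y + z); rw [← add_assoc] at this; linarith
        linarith
      have hyz2 : u/2 < |y| + |z| := lt_of_lt_of_le hyz (abs_add_le _ _)
      by_cases hzb : u/4 ≤ |z|
      · have hx4 : x^2 ≤ 4 * |z|^2 := by nlinarith
        rcases hq with rfl | rfl
        · simp only [pow_one, Nat.reduceMul]
          refine final c A _ _ _ _ _ hc (pow_nonneg hm0 2) (pow_nonneg hz0 2)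
            (mul_nonneg ha hm0) (mul_nonneg ha hz0) hA ?_
          nlinarith [hx4, mul_nonneg hc.le hA, mul_nonneg hc.le (mul_nonneg hm0 hm0),
            mul_nonneg hm0 hm0, mul_nonneg ha hm0, mul_nonneg ha hz0]
        · simp only [Nat.reduceMul]
          refine final c A _ _ _ _ _ hc (pow_nonneg hm0 4) (pow_nonneg hz0 4)
            (mul_nonneg (pow_nonneg ha 2) (pow_nonneg hm0 2))
            (mul_nonneg (pow_nonneg ha 2) (pow_nonneg hz0 2)) hA ?_
          have h4 : x^4 ≤ 16 * |z|^4 := by nlinarith [hx4, sq_nonneg x, mul_nonneg hz0 hz0]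
          nlinarith [h4, mul_nonneg hc.le hA,
            mul_nonneg hc.le (mul_nonneg (mul_nonneg hm0 hm0) (mul_nonneg hm0 hm0)),
            mul_nonneg (mul_nonneg hm0 hm0) (mul_nonneg hm0 hm0),
            mul_nonneg (mul_nonneg ha ha) (mul_nonneg hm0 hm0),
            mul_nonneg (mul_nonneg ha ha) (mul_nonneg hz0 hz0)]
      · push_neg at hzb
        have hyb : u/4 ≤ |y| := by linarith
        have hmb : u/4 ≤ m := le_min hyb (by linarith)
        have hx4 : x^2 ≤ 4 * m^2 := by nlinarith
        rcases hq with rfl | rfl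
        · simp only [pow_one, Nat.reduceMul]
          refine final c A _ _ _ _ _ hc (pow_nonneg hm0 2) (pow_nonneg hz0 2)
            (mul_nonneg ha hm0) (mul_nonneg ha hz0) hA ?_
          nlinarith [hx4, mul_nonneg hc.le hA, mul_nonneg hc.le (mul_nonneg hm0 hm0),
            mul_nonneg hz0 hz0, mul_nonneg ha hm0, mul_nonneg ha hz0]
        · simp only [Nat.reduceMul]
          refine final c A _ _ _ _ _ hc (pow_nonneg hm0 4) (pow_nonneg hz0 4)
            (mul_nonneg (pow_nonneg ha 2) (pow_nonneg hm0 2))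
            (mul_nonneg (pow_nonneg ha 2) (pow_nonneg hz0 2)) hA ?_
          have h4 : x^4 ≤ 16 * m^4 := by nlinarith [hx4, sq_nonneg x, mul_nonneg hm0 hm0]
          nlinarith [h4, mul_nonneg hc.le hA,
            mul_nonneg hc.le (mul_nonneg (mul_nonneg hm0 hm0) (mul_nonneg hm0 hm0)),
            mul_nonneg (mul_nonneg hz0 hz0) (mul_nonneg hz0 hz0),
            mul_nonneg (mul_nonneg ha ha) (mul_nonneg hm0 hm0),
            mul_nonneg (mul_nonneg ha ha) (mul_nonneg hz0 hz0)]
end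

section
/- Let F : ℝ × (0,∞)² → ℝ be C¹ with |∂F/∂x (x,y,z)| ≤ C·|x|^{p−1} for some p ≥ 1 and all |x| ≤ ε, y,z in a fixed compact subset of (0,∞). Fix m ≥ 2/ε. Then there is a constant K such that for all u ∈ (0, 1/m), all y, z in the compact set, and all x, x' ∈ ℝ with |x| ≤ 1/m and |x'| ≤ u/2, and with F(0,y,z) = 0: | F(x+x', y, z)·1_{|x+x'| > u} − F(x,y,z)·1_{|x| > u} | ≤ K·( |x|^{p−1}·|x'| + (|x| ∧ u)^p ). -/
/-!
Since `F(0,y,z) = 0`, the mean value theorem and the derivative bound give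
`|F(a,y,z)| ≤ C M^p` whenever `|a| ≤ M ≤ ε`, and `|F(b) - F(a)| ≤ C M^(p-1) |b - a|` for
`|a|, |b| ≤ M`. Compare the two indicators: if both are on, then `u < |x|`, so
`|x + x'| ≤ 2|x|` and the Lipschitz bound with `M = 2|x|` gives the term `|x|^(p-1) |x'|`.
If only `x + x'` is on, then `u/2 < |x| ≤ u` and `|x + x'| ≤ 2|x|`; if only `x` is on, then
`|x| ≤ 3u/2`; in both cases the size bound gives `(2 (|x| ∧ u))^p`. Hence `K = C 2^p`.
-/

open Real

section RpowDerivBound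

variable {f : ℝ → ℝ} {C ε p M : ℝ}

lemma abs_sub_le_of_abs_deriv_le_rpow (hf : Differentiable ℝ f) (hC : 0 ≤ C) (hp : 1 ≤ p)
    (hd : ∀ t, |t| ≤ ε → |deriv f t| ≤ C * |t| ^ (p - 1)) (hMε : M ≤ ε)
    {a b : ℝ} (ha : |a| ≤ M) (hb : |b| ≤ M) :
    |f b - f a| ≤ C * M ^ (p - 1) * |b - a| := by
  have hbound : ∀ t ∈ Set.Icc (-M) M, ‖deriv f t‖ ≤ C * M ^ (p - 1) := fun t ht => by
    have htM : |t| ≤ M := abs_le.2 ht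
    calc ‖deriv f t‖ ≤ C * |t| ^ (p - 1) := hd t (htM.trans hMε)
      _ ≤ C * M ^ (p - 1) := by gcongr
  simpa only [Real.norm_eq_abs] using
    (convex_Icc (-M) M).norm_image_sub_le_of_norm_deriv_le (fun t _ => hf t) hbound
      (abs_le.1 ha) (abs_le.1 hb)

lemma abs_le_of_abs_deriv_le_rpow (hf : Differentiable ℝ f) (hC : 0 ≤ C) (hp : 1 ≤ p)
    (hd : ∀ t, |t| ≤ ε → |deriv f t| ≤ C * |t| ^ (p - 1)) (hf0 : f 0 = 0) (hMε : M ≤ ε)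
    {a : ℝ} (ha : |a| ≤ M) :
    |f a| ≤ C * M ^ p := by
  have hM : 0 ≤ M := (abs_nonneg a).trans ha
  calc |f a| = |f a - f 0| := by rw [hf0, sub_zero]
    _ ≤ C * M ^ (p - 1) * |a - 0| :=
      abs_sub_le_of_abs_deriv_le_rpow hf hC hp hd hMε (by simpa using hM) ha
    _ ≤ C * M ^ (p - 1) * M := by rw [sub_zero]; gcongr
    _ = C * M ^ p := by rw [mul_assoc, ← rpow_add_one' hM (by linarith), sub_add_cancel]

end RpowDerivBound

lemma two_mul_rpow_sub_one_le {r p : ℝ} (hr : 0 ≤ r) :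
    (2 * r) ^ (p - 1) ≤ 2 ^ p * r ^ (p - 1) := by
  rw [mul_rpow zero_le_two hr]
  gcongr
  · norm_num
  · linarith

lemma abs_ite_sub_ite_le {f : ℝ → ℝ} {C ε p u x x' : ℝ} (hf : Differentiable ℝ f)
    (hC : 0 ≤ C) (hp : 1 ≤ p) (hd : ∀ t, |t| ≤ ε → |deriv f t| ≤ C * |t| ^ (p - 1))
    (hf0 : f 0 = 0) (hx : |x| ≤ ε / 2) (hx' : |x'| ≤ u / 2) :
    |(if u < |x + x'| then f (x + x') else 0) - (if u < |x| then f x else 0)| ≤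
      C * 2 ^ p * (|x| ^ (p - 1) * |x'| + min |x| u ^ p) := by
  have hu : 0 ≤ u := by linarith [abs_nonneg x']
  have hsum : |x + x'| ≤ |x| + |x'| := abs_add_le x x'
  have htri : |x| ≤ |x + x'| + |x'| := by simpa using abs_add_le (x + x') (-x')
  have hxx' : 0 ≤ |x| ^ (p - 1) * |x'| := by positivity
  have hmin : 0 ≤ min |x| u ^ p := by positivity
  split_ifs with hon hxon hxoff
  · calc |f (x + x') - f x| ≤ C * (2 * |x|) ^ (p - 1) * |x + x' - x| :=
          abs_sub_le_of_abs_deriv_le_rpow hf hC hp hd (by linarith)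
            (by linarith [abs_nonneg x]) (by linarith)
      _ ≤ C * (2 ^ p * |x| ^ (p - 1)) * |x'| := by
          rw [add_sub_cancel_left]
          gcongr
          exact two_mul_rpow_sub_one_le (abs_nonneg x)
      _ = C * 2 ^ p * (|x| ^ (p - 1) * |x'|) := by ring
      _ ≤ C * 2 ^ p * (|x| ^ (p - 1) * |x'| + min |x| u ^ p) := by
          gcongr
          linarith
  · rw [sub_zero, min_eq_left (not_lt.1 hxon)]
    calc |f (x + x')| ≤ C * (2 * |x|) ^ p :=
          abs_le_of_abs_deriv_le_rpow hf hC hp hd hf0 (by linarith) (by linarith)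
      _ ≤ C * 2 ^ p * (|x| ^ (p - 1) * |x'| + |x| ^ p) := by
          rw [mul_rpow zero_le_two (abs_nonneg x), ← mul_assoc]
          gcongr
          linarith
  · rw [zero_sub, abs_neg, min_eq_right hxoff.le]
    calc |f x| ≤ C * (2 * u) ^ p :=
          abs_le_of_abs_deriv_le_rpow hf hC hp hd hf0 (by linarith) (by linarith)
      _ ≤ C * 2 ^ p * (|x| ^ (p - 1) * |x'| + u ^ p) := by
          rw [mul_rpow zero_le_two hu, ← mul_assoc]
          gcongr
          linarith
  · rw [sub_zero, abs_zero]
    positivity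

theorem stmt_9_general (F : ℝ → ℝ → ℝ → ℝ) (S : Set ℝ)
    (C ε p m : ℝ) (hC : 0 < C) (hε : 0 < ε) (hp : 1 ≤ p) (hm : 2 / ε ≤ m) (hm0 : 0 < m)
    (hdiff : ∀ y ∈ S, ∀ z ∈ S, ContDiff ℝ 1 (fun x => F x y z))
    (hderiv : ∀ y ∈ S, ∀ z ∈ S, ∀ x : ℝ, |x| ≤ ε →
      |deriv (fun t => F t y z) x| ≤ C * |x| ^ (p - 1))
    (hF0 : ∀ y ∈ S, ∀ z ∈ S, F 0 y z = 0) :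
    ∃ K : ℝ, 0 < K ∧ ∀ u : ℝ, 0 < u → u < 1 / m → ∀ y ∈ S, ∀ z ∈ S, ∀ x x' : ℝ,
      |x| ≤ 1 / m → |x'| ≤ u / 2 →
      |(if u < |x + x'| then F (x + x') y z else 0) - (if u < |x| then F x y z else 0)| ≤
        K * (|x| ^ (p - 1) * |x'| + (min |x| u) ^ p) := by
  have hmε : 1 / m ≤ ε / 2 := by
    rw [div_le_iff₀ hε] at hm
    rw [div_le_div_iff₀ hm0 two_pos]
    linarith
  refine ⟨C * 2 ^ p, by positivity, fun u _ _ y hy z hz x x' hx hx' => ?_⟩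
  exact abs_ite_sub_ite_le ((hdiff y hy z hz).differentiable one_ne_zero) hC.le hp
    (hderiv y hy z hz) (hF0 y hy z hz) (hx.trans hmε) hx'

theorem stmt_9 (F : ℝ → ℝ → ℝ → ℝ) (S : Set ℝ) (hS : IsCompact S) (hSpos : S ⊆ Set.Ioi 0)
    (C ε p m : ℝ) (hC : 0 < C) (hε : 0 < ε) (hp : 1 ≤ p) (hm : 2 / ε ≤ m) (hm0 : 0 < m)
    (hdiff : ∀ y ∈ S, ∀ z ∈ S, ContDiff ℝ 1 (fun x => F x y z))
    (hderiv : ∀ y ∈ S, ∀ z ∈ S, ∀ x : ℝ, |x| ≤ ε →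
      |deriv (fun t => F t y z) x| ≤ C * |x| ^ (p - 1))
    (hF0 : ∀ y ∈ S, ∀ z ∈ S, F 0 y z = 0) :
    ∃ K : ℝ, 0 < K ∧ ∀ u : ℝ, 0 < u → u < 1 / m → ∀ y ∈ S, ∀ z ∈ S, ∀ x x' : ℝ,
      |x| ≤ 1 / m → |x'| ≤ u / 2 →
      |(if u < |x + x'| then F (x + x') y z else 0) - (if u < |x| then F x y z else 0)| ≤
        K * (|x| ^ (p - 1) * |x'| + (min |x| u) ^ p) :=
  stmt_9_general F S C ε p m hC hε hp hm hm0 hdiff hderiv hF0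
end
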